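/- Left-bias of alternates: if θ ⊢ p ≈ t in the declarative semantics and the machine started from (∅, [], [match (p ∥ p') t]) reaches a terminal state, then that terminal state is success(θ'') for some θ'' (it is not failure). -/

import Mathlib

namespace PyPM
/-- Terms over a signature of function symbols (names with lists of arguments). -/
inductive Tm where
  | app : String → List Tm → Tm


/-- Basic patterns: variables, function applications, and alternates. -/
inductive Pat where
  | var : String → Pat
  | app : String → List Pat → Pat
  | alt : Pat → Pat → Pat

/-- Substitutions: finite maps from variables to terms (modeled as partial functions). -/
abbrev Subst := String → Option Tm

def emptySubst : Subst := fun _ => none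

def Subst.update (θ : Subst) (x : String) (t : Tm) : Subst :=
  fun y => if y = x then some t else θ y

/-- θ ⊆ θ' : every binding of θ is a binding of θ'. -/
def Subst.le (θ θ' : Subst) : Prop := ∀ x t, θ x = some t → θ' x = some t

/-- Declarative matching semantics: θ ⊢ p ≈ t. -/
inductive Matches : Subst → Pat → Tm → Prop where
  | var {θ : Subst} {x : String} {t : Tm} :
      θ x = some t → Matches θ (.var x) t
  | app {θ : Subst} {f : String} {ps : List Pat} {ts : List Tm}
      (hlen : ps.length = ts.length)
      (hargs : ∀ i (h1 : i < ps.length) (h2 : i < ts.length), Matches θ ps[i] ts[i]) :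
      Matches θ (.app f ps) (.app f ts)
  | alt1 {θ : Subst} {p p' : Pat} {t : Tm} :
      Matches θ p t → Matches θ (.alt p p') t
  | alt2 {θ : Subst} {p p' : Pat} {t : Tm} :
      Matches θ p' t → Matches θ (.alt p p') t

/-- Actions in the machine continuation. -/
inductive Action where
  | doMatch : Pat → Tm → Action

abbrev Cont := List Action
abbrev Frame := Subst × Cont
abbrev Stack := List Frame

/-- Machine states. -/
inductive St where
  | success : Subst → St
  | failure : St
  | running : Subst → Stack → Cont → St

/-- Backtracking: pop the stack, or fail if it is empty. -/
def backtrack : Stack → St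
  | [] => .failure
  | (θ, k) :: stk => .running θ stk k

/-- The step relation of the algorithmic matching machine. -/
inductive Step : St → St → Prop where
  | success {θ stk} :
      Step (.running θ stk []) (.success θ)
  | varBind {θ : Subst} {stk x t k} :
      θ x = none →
      Step (.running θ stk (.doMatch (.var x) t :: k)) (.running (θ.update x t) stk k)
  | varBound {θ : Subst} {stk x t k} :
      θ x = some t →
      Step (.running θ stk (.doMatch (.var x) t :: k)) (.running θ stk k)
  | varConflict {θ : Subst} {stk x t t' k} :
      θ x = some t' → t' ≠ t →
      Step (.running θ stk (.doMatch (.var x) t :: k)) (backtrack stk)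
  | fn {θ stk f ps ts k} :
      ps.length = ts.length →
      Step (.running θ stk (.doMatch (.app f ps) (.app f ts) :: k))
           (.running θ stk (((ps.zip ts).map fun pt => .doMatch pt.1 pt.2) ++ k))
  | fnConflict {θ stk f g ps ts k} :
      f ≠ g ∨ ps.length ≠ ts.length →
      Step (.running θ stk (.doMatch (.app f ps) (.app g ts) :: k)) (backtrack stk)
  | alt {θ stk p p' t k} :
      Step (.running θ stk (.doMatch (.alt p p') t :: k))
           (.running θ ((θ, .doMatch p' t :: k) :: stk) (.doMatch p t :: k))

end PyPM
namespace PyPM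

/-- Alternate-free patterns: built only from variables and function applications. -/
inductive AltFree : Pat → Prop where
  | var {x : String} : AltFree (.var x)
  | app {f : String} {ps : List Pat} : (∀ p ∈ ps, AltFree p) → AltFree (.app f ps)

/-- `VarIn x p`: the variable x occurs in the pattern p. -/
inductive VarIn (x : String) : Pat → Prop where
  | var : VarIn x (.var x)
  | app {f : String} {ps : List Pat} {p : Pat} : p ∈ ps → VarIn x p → VarIn x (.app f ps)
  | alt1 {p p' : Pat} : VarIn x p → VarIn x (.alt p p')
  | alt2 {p p' : Pat} : VarIn x p' → VarIn x (.alt p p')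

/-- Number of occurrences of the variable x in a pattern. -/
def varCount (x : String) : Pat → Nat
  | .var y => if y = x then 1 else 0
  | .app _ ps => (ps.attach.map (fun q => varCount x q.1)).sum
  | .alt p q => varCount x p + varCount x q
  decreasing_by
  all_goals first
    | (have := List.sizeOf_lt_of_mem q.2; simp only [Pat.app.sizeOf_spec]; omega)
    | (simp only [Pat.alt.sizeOf_spec]; omega)

/-- A pattern is linear if each variable occurs at most once. -/
def Linear (p : Pat) : Prop := ∀ x, varCount x p ≤ 1

/-- Reading a term as a (ground, alternate-free) pattern. -/
def Tm.toPat : Tm → Pat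
  | .app f ts => .app f (ts.attach.map (fun q => Tm.toPat q.1))
  decreasing_by
  have := List.sizeOf_lt_of_mem q.2; simp only [Tm.app.sizeOf_spec]; omega

/-- Ground, alternate-free patterns: only the function-application constructor. -/
inductive GroundAltFree : Pat → Prop where
  | app {f : String} {ps : List Pat} : (∀ p ∈ ps, GroundAltFree p) → GroundAltFree (.app f ps)

end PyPM

/-!
Call a frame `(θ, k)` satisfiable if some extension of `θ` satisfies every match in `k`
declaratively. Each machine step preserves the invariant that the current frame or some frame
on the backtrack stack is satisfiable: a satisfiable frame never meets a conflict, so the machine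
only backtracks out of unsatisfiable frames, and for an alternate one of the two frames it
creates inherits satisfiability. Since `θ ⊢ p ≈ t` gives `θ ⊢ p ∥ p' ≈ t`, the invariant holds
initially. It fails in the state `failure`, and every running state can step, so a terminal
state reached by the machine is a success.
-/

namespace PyPM

def Action.Holds (θ : Subst) : Action → Prop
  | .doMatch p t => Matches θ p t

def Satisfiable (θ : Subst) (k : Cont) : Prop :=
  ∃ θ', θ.le θ' ∧ ∀ a ∈ k, a.Holds θ'

def St.Viable : St → Prop
  | .success _ => True
  | .failure => False
  | .running θ stk k => ∃ fr ∈ (θ, k) :: stk, Satisfiable fr.1 fr.2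

section Satisfiable

variable {θ : Subst} {k : Cont} {t : Tm}

theorem Satisfiable.of_cons {a : Action} (h : Satisfiable θ (a :: k)) : Satisfiable θ k :=
  let ⟨θ', hle, hall⟩ := h
  ⟨θ', hle, fun b hb => hall b (List.mem_cons_of_mem a hb)⟩

theorem Satisfiable.update {x : String} (h : Satisfiable θ (.doMatch (.var x) t :: k)) :
    Satisfiable (θ.update x t) k := by
  obtain ⟨θ', hle, hall⟩ := h
  have hx : θ' x = some t := by
    cases hall _ List.mem_cons_self with
    | var hx => exact hx
  refine ⟨θ', fun y u hy => ?_, fun b hb => hall b (List.mem_cons_of_mem _ hb)⟩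
  unfold Subst.update at hy
  split_ifs at hy with hyx
  · rwa [hyx, hx]
  · exact hle y u hy

theorem not_satisfiable_var_of_ne {x : String} {t' : Tm} (hx : θ x = some t') (hne : t' ≠ t) :
    ¬ Satisfiable θ (.doMatch (.var x) t :: k) := by
  rintro ⟨θ', hle, hall⟩
  cases hall _ List.mem_cons_self with
  | var hx' => exact hne (Option.some_injective _ ((hle x t' hx).symm.trans hx'))

theorem Matches.holds_zip {f : String} {ps : List Pat} {ts : List Tm}
    (h : Matches θ (.app f ps) (.app f ts)) :
    ∀ a ∈ (ps.zip ts).map (fun pt => Action.doMatch pt.1 pt.2), a.Holds θ := by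
  cases h with
  | app _ hargs =>
    intro a ha
    obtain ⟨_, hpt, rfl⟩ := List.mem_map.mp ha
    obtain ⟨i, hi, rfl⟩ := List.mem_iff_getElem.mp hpt
    rw [List.length_zip, lt_min_iff] at hi
    simpa [Action.Holds] using hargs i hi.1 hi.2

theorem Satisfiable.app {f : String} {ps : List Pat} {ts : List Tm}
    (h : Satisfiable θ (.doMatch (.app f ps) (.app f ts) :: k)) :
    Satisfiable θ (((ps.zip ts).map fun pt => .doMatch pt.1 pt.2) ++ k) := by
  obtain ⟨θ', hle, hall⟩ := h
  refine ⟨θ', hle, fun a ha => ?_⟩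
  rcases List.mem_append.mp ha with ha | ha
  · exact Matches.holds_zip (hall _ List.mem_cons_self) a ha
  · exact hall a (List.mem_cons_of_mem _ ha)

theorem not_satisfiable_app_of_ne {f g : String} {ps : List Pat} {ts : List Tm}
    (hne : f ≠ g ∨ ps.length ≠ ts.length) :
    ¬ Satisfiable θ (.doMatch (.app f ps) (.app g ts) :: k) := by
  rintro ⟨θ', -, hall⟩
  cases hall _ List.mem_cons_self with
  | app hlen _ => exact hne.elim (· rfl) (· hlen)

theorem Satisfiable.alt {p p' : Pat} (h : Satisfiable θ (.doMatch (.alt p p') t :: k)) :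
    Satisfiable θ (.doMatch p t :: k) ∨ Satisfiable θ (.doMatch p' t :: k) := by
  obtain ⟨θ', hle, hall⟩ := h
  have hrest : ∀ b ∈ k, b.Holds θ' := fun b hb => hall b (List.mem_cons_of_mem _ hb)
  cases hall _ List.mem_cons_self with
  | alt1 hp => exact .inl ⟨θ', hle, List.forall_mem_cons.mpr ⟨hp, hrest⟩⟩
  | alt2 hp' => exact .inr ⟨θ', hle, List.forall_mem_cons.mpr ⟨hp', hrest⟩⟩

end Satisfiable

section Viable

variable {θ θ' : Subst} {stk : Stack} {k k' : Cont}

theorem viable_running_iff :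
    (St.running θ stk k).Viable ↔ Satisfiable θ k ∨ ∃ fr ∈ stk, Satisfiable fr.1 fr.2 := by
  simp [St.Viable]

theorem viable_backtrack_iff : (backtrack stk).Viable ↔ ∃ fr ∈ stk, Satisfiable fr.1 fr.2 := by
  cases stk <;> simp [backtrack, St.Viable]

theorem St.Viable.running_of_imp (h : (St.running θ stk k).Viable)
    (himp : Satisfiable θ k → Satisfiable θ' k') : (St.running θ' stk k').Viable := by
  rw [viable_running_iff] at h ⊢
  exact h.imp_left himp

theorem St.Viable.backtrack_of_not_satisfiable (h : (St.running θ stk k).Viable)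
    (hk : ¬ Satisfiable θ k) : (backtrack stk).Viable :=
  viable_backtrack_iff.mpr ((viable_running_iff.mp h).resolve_left hk)

theorem Step.viable {st st' : St} (hs : Step st st') (h : st.Viable) : st'.Viable := by
  cases hs with
  | success => trivial
  | varBind => exact h.running_of_imp Satisfiable.update
  | varBound => exact h.running_of_imp Satisfiable.of_cons
  | varConflict hx hne => exact h.backtrack_of_not_satisfiable (not_satisfiable_var_of_ne hx hne)
  | fn => exact h.running_of_imp Satisfiable.app
  | fnConflict hne => exact h.backtrack_of_not_satisfiable (not_satisfiable_app_of_ne hne)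
  | alt =>
    simp only [viable_running_iff, List.mem_cons, exists_eq_or_imp] at h ⊢
    rcases h with hk | hstk
    · exact hk.alt.imp_right .inl
    · exact .inr (.inr hstk)

theorem viable_of_transGen {st st' : St} (hs : Relation.TransGen Step st st') (h : st.Viable) :
    st'.Viable := by
  induction hs with
  | single hs => exact hs.viable h
  | tail _ hs ih => exact hs.viable ih

end Viable

theorem exists_step_running (θ : Subst) (stk : Stack) (k : Cont) :
    ∃ st', Step (.running θ stk k) st' := by
  rcases k with _ | ⟨⟨p, t⟩, k⟩
  · exact ⟨_, .success⟩
  rcases p with x | ⟨f, ps⟩ | ⟨p, p'⟩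
  · rcases hx : θ x with _ | t'
    · exact ⟨_, .varBind hx⟩
    by_cases ht : t' = t
    · subst ht
      exact ⟨_, .varBound hx⟩
    · exact ⟨_, .varConflict hx ht⟩
  · obtain ⟨g, ts⟩ := t
    by_cases hfit : f = g ∧ ps.length = ts.length
    · obtain ⟨rfl, hlen⟩ := hfit
      exact ⟨_, .fn hlen⟩
    · exact ⟨_, .fnConflict (not_and_or.mp hfit)⟩
  · exact ⟨_, .alt⟩

theorem eq_success_of_viable_of_terminal {st : St} (h : st.Viable)
    (hterm : ∀ st' : St, ¬ Step st st') : ∃ θ, st = .success θ := by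
  rcases st with θ | _ | ⟨θ, stk, k⟩
  · exact ⟨θ, rfl⟩
  · exact h.elim
  · obtain ⟨st', hs⟩ := exists_step_running θ stk k
    exact (hterm st' hs).elim

end PyPM

open PyPM

theorem alt_left_bias_general {p p' : Pat} {t : Tm} {θ : Subst} {st : St}
    (hm : Matches θ p t)
    (hrun : Relation.TransGen Step (.running emptySubst [] [.doMatch (.alt p p') t]) st)
    (hterm : ∀ st' : St, ¬ Step st st') :
    ∃ θ'' : Subst, st = St.success θ'' := by
  have hinit : (St.running emptySubst [] [.doMatch (.alt p p') t]).Viable :=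
    viable_running_iff.mpr <| .inl
      ⟨θ, (fun _ _ h => nomatch h), List.forall_mem_singleton.mpr hm.alt1⟩
  exact eq_success_of_viable_of_terminal (viable_of_transGen hrun hinit) hterm

/-- Left-bias of alternates: if the left disjunct matches declaratively (with a witness
substitution bound only on its variables, so the match is realizable from the empty
substitution), then any terminal state the machine reaches on p ∥ p' is a success. -/
theorem alt_left_bias {p p' : Pat} {t : Tm} {θ : Subst} {st : St}
    (hm : Matches θ p t)
    (hdom : ∀ x : String, (∃ u, θ x = some u) → VarIn x p)
    (hrun : Relation.TransGen Step (.running emptySubst [] [.doMatch (.alt p p') t]) st)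
    (hterm : ∀ st' : St, ¬ Step st st') :
    ∃ θ'' : Subst, st = St.success θ'' :=
  alt_left_bias_general hm hrun hterm
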